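/- Let A be a finite abelian group with a nondegenerate quadratic function q, and let (B,β) be a Schellekens pair for (A,q). Then the subgroup Γ(B,β) of A × A is Lagrangian with respect to q×q⁻¹: it is isotropic and equals its own orthogonal complement Γ(B,β)^⊥ = {z ∈ A×A | τ(z,w) = 1 for all w ∈ Γ(B,β)}, where τ((a,b),(c,d)) = σ(a,c)σ(b,d)⁻¹. -/

import Mathlib

/-- The bicharacter `σ(a,b) = q(ab) q(a)⁻¹ q(b)⁻¹` associated to `q`. -/
def qSigma {A : Type*} [CommGroup A] (q : A → ℂˣ) (a b : A) : ℂˣ :=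
  q (a * b) * (q a)⁻¹ * (q b)⁻¹

/-- `q` is a quadratic function: `q(a⁻¹) = q(a)` and the associated `σ` is
multiplicative in each argument. -/
def IsQuadratic {A : Type*} [CommGroup A] (q : A → ℂˣ) : Prop :=
  (∀ a : A, q a⁻¹ = q a) ∧
  (∀ a b c : A, qSigma q (a * b) c = qSigma q a c * qSigma q b c) ∧
  (∀ a b c : A, qSigma q a (b * c) = qSigma q a b * qSigma q a c)

/-- `q` is nondegenerate: for every `a ≠ 1` the homomorphism `σ(a,−)` is nontrivial. -/
def IsNondeg {A : Type*} [CommGroup A] (q : A → ℂˣ) : Prop :=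
  ∀ a : A, a ≠ 1 → ∃ b : A, qSigma q a b ≠ 1

/-- `(B, β)` is a Schellekens pair for `(A, q)`: `β` is symmetric, multiplicative
in each argument, and `β(b,b) = q(b)` on the subgroup `B`. -/
def IsSchellekens {A : Type*} [CommGroup A] (q : A → ℂˣ) (B : Subgroup A)
    (β : B → B → ℂˣ) : Prop :=
  (∀ b c : B, β b c = β c b) ∧
  (∀ b c d : B, β (b * c) d = β b d * β c d) ∧
  (∀ b c d : B, β b (c * d) = β b c * β b d) ∧
  (∀ b : B, β b b = q (b : A))

/-- `Γ(B,β) = {(a, a⁻¹ b) | a ∈ A, b ∈ B, σ(c,a) = β(c,b) ∀ c ∈ B}` as a subset of `A × A`. -/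
def GammaSet {A : Type*} [CommGroup A] (q : A → ℂˣ) (B : Subgroup A)
    (β : B → B → ℂˣ) : Set (A × A) :=
  {z | ∃ b : B, z.2 = z.1⁻¹ * (b : A) ∧ ∀ c : B, qSigma q (c : A) z.1 = β c b}

/-- The bicharacter `τ((a,b),(c,d)) = σ(a,c) σ(b,d)⁻¹` on `A × A`
associated to the quadratic function `q × q⁻¹`. -/
def qTau {A : Type*} [CommGroup A] (q : A → ℂˣ) (z w : A × A) : ℂˣ :=
  qSigma q z.1 w.1 * (qSigma q z.2 w.2)⁻¹

/-!
On `B` the bicharacter `σ` polarizes as `σ(b, c) = β(b, c) β(c, b)`; with this, isotropy of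
`Γ(B, β)` and `Γ ⊆ Γ^⊥` are direct expansions. For `Γ^⊥ ⊆ Γ`, nondegeneracy makes
`a ↦ σ(·, a)` an isomorphism of the finite group `A` onto its character group, so every character
of `B` is `σ(·, a)` for some `a`, and `B` is the annihilator of its annihilator `B^⊥`. Pairing
`(x, y) ∈ Γ^⊥` with the elements `(a, a⁻¹)`, `a ∈ B^⊥`, of `Γ` gives `xy ∈ B`; pairing it with
`(b, b)`, `b ∈ B`, and with `(a, a⁻¹ c)` where `σ(·, a) = β(·, c)` on `B` gives
`σ(c, x) = β(c, xy)`.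
-/

section qSigma

variable {A : Type*} [CommGroup A]

lemma qSigma_comm (q : A → ℂˣ) (a b : A) : qSigma q a b = qSigma q b a := by
  unfold qSigma; rw [mul_comm a b, mul_right_comm]

lemma apply_mul_eq_qSigma_mul (q : A → ℂˣ) (a b : A) :
    q (a * b) = qSigma q a b * q a * q b := by
  rw [qSigma, mul_right_comm _ (q b)⁻¹, inv_mul_cancel_right, inv_mul_cancel_right]

lemma qTau_eq_one_iff (q : A → ℂˣ) (z w : A × A) :
    qTau q z w = 1 ↔ qSigma q z.1 w.1 = qSigma q z.2 w.2 :=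
  mul_inv_eq_one

end qSigma

namespace IsQuadratic

variable {A : Type*} [CommGroup A] {q : A → ℂˣ}

def bichar (hq : IsQuadratic q) : A →* A →* ℂˣ :=
  MonoidHom.mk' (fun a => MonoidHom.mk' (qSigma q a) (hq.2.2 a))
    fun a b => MonoidHom.ext (hq.2.1 a b)

variable (hq : IsQuadratic q)
include hq

@[simp] lemma bichar_apply (a b : A) : hq.bichar a b = qSigma q a b := rfl

lemma apply_inv (a : A) : q a⁻¹ = q a := hq.1 a

lemma qSigma_mul_left (a b c : A) : qSigma q (a * b) c = qSigma q a c * qSigma q b c :=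
  hq.2.1 a b c

lemma qSigma_mul_right (a b c : A) : qSigma q a (b * c) = qSigma q a b * qSigma q a c :=
  hq.2.2 a b c

lemma qSigma_inv_left (a b : A) : qSigma q a⁻¹ b = (qSigma q a b)⁻¹ := by
  rw [← bichar_apply hq, map_inv, MonoidHom.inv_apply, bichar_apply]

lemma qSigma_inv_right (a b : A) : qSigma q a b⁻¹ = (qSigma q a b)⁻¹ := by
  rw [← bichar_apply hq, map_inv, bichar_apply]

end IsQuadratic

namespace IsNondeg

variable {A : Type*} [CommGroup A] [Finite A] {q : A → ℂˣ}
  (hnd : IsNondeg q) (hq : IsQuadratic q)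
include hnd hq

lemma bichar_bijective : Function.Bijective hq.bichar := by
  refine Function.Injective.bijective_of_nat_card_le ?_ ?_
  · refine (injective_iff_map_eq_one _).2 fun a ha => of_not_not fun h => ?_
    obtain ⟨b, hb⟩ := hnd a h
    exact hb (by simpa using DFunLike.congr_fun ha b)
  · rw [CommGroup.card_monoidHom_of_hasEnoughRootsOfUnity A ℂ]

lemma exists_qSigma_eq_of_subgroup (B : Subgroup A) (ψ : B →* ℂˣ) :
    ∃ a : A, ∀ c : B, qSigma q c a = ψ c := by
  obtain ⟨χ, rfl⟩ := MonoidHom.domRestrict_surjective ℂ B ψ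
  obtain ⟨a, rfl⟩ := (bichar_bijective hnd hq).2 χ
  exact ⟨a, fun c => qSigma_comm q _ _⟩

lemma mem_of_forall_qSigma_eq_one (B : Subgroup A) {x : A}
    (hx : ∀ a : A, (∀ c ∈ B, qSigma q c a = 1) → qSigma q x a = 1) : x ∈ B := by
  rw [← CommGroup.forall_monoidHom_apply_eq_one_iff ℂ B x]
  intro φ hφ
  obtain ⟨a, rfl⟩ := (bichar_bijective hnd hq).2 φ
  simp only [IsQuadratic.bichar_apply, qSigma_comm q a] at hφ ⊢
  exact hx a hφ

end IsNondeg

namespace IsSchellekens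

variable {A : Type*} [CommGroup A] {q : A → ℂˣ} {B : Subgroup A} {β : B → B → ℂˣ}

def bichar (hβ : IsSchellekens q B β) : B →* B →* ℂˣ :=
  MonoidHom.mk' (fun b => MonoidHom.mk' (β b) (hβ.2.2.1 b))
    fun b c => MonoidHom.ext (hβ.2.1 b c)

variable (hβ : IsSchellekens q B β)
include hβ

@[simp] lemma bichar_apply (b c : B) : hβ.bichar b c = β b c := rfl

lemma symm (b c : B) : β b c = β c b := hβ.1 b c

lemma apply_self (b : B) : β b b = q b := hβ.2.2.2 b

lemma mul_right (b c d : B) : β b (c * d) = β b c * β b d := hβ.2.2.1 b c d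

lemma one_right (b : B) : β b 1 = 1 := map_one (hβ.bichar b)

lemma qSigma_eq (b c : B) : qSigma q b c = β b c * β c b := by
  rw [qSigma, ← Subgroup.coe_mul, ← hβ.apply_self, ← hβ.apply_self, ← hβ.apply_self]
  simp only [← bichar_apply hβ, map_mul, MonoidHom.mul_apply]
  apply Units.ext; push_cast; field_simp

end IsSchellekens

section Gamma

variable {A : Type*} [CommGroup A] {q : A → ℂˣ} {B : Subgroup A} {β : B → B → ℂˣ}

lemma mk_mem_gammaSet {a : A} {b : B} (h : ∀ c : B, qSigma q c a = β c b) :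
    (a, a⁻¹ * b) ∈ GammaSet q B β :=
  ⟨b, rfl, h⟩

variable (hq : IsQuadratic q) (hβ : IsSchellekens q B β)

include hβ in
lemma mk_inv_mem_gammaSet {a : A} (ha : ∀ c : B, qSigma q c a = 1) :
    (a, a⁻¹) ∈ GammaSet q B β :=
  ⟨1, by simp, fun c => by rw [ha, hβ.one_right]⟩

include hβ in
lemma diag_mem_gammaSet (b : B) : ((b : A), (b : A)) ∈ GammaSet q B β :=
  ⟨b * b, by simp, fun c => by rw [hβ.qSigma_eq, hβ.symm b c, hβ.mul_right]⟩

include hq hβ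

lemma apply_snd_eq_apply_fst_of_mem_gammaSet {z : A × A} (hz : z ∈ GammaSet q B β) :
    q z.2 = q z.1 := by
  obtain ⟨a, a'⟩ := z
  obtain ⟨b, hb : a' = a⁻¹ * b, hab⟩ := hz
  subst hb
  rw [apply_mul_eq_qSigma_mul q, hq.qSigma_inv_left, hq.apply_inv, qSigma_comm, hab,
    hβ.apply_self, inv_mul_cancel_comm]

lemma qTau_eq_one_of_mem_gammaSet {z w : A × A} (hz : z ∈ GammaSet q B β)
    (hw : w ∈ GammaSet q B β) : qTau q z w = 1 := by
  obtain ⟨a, a'⟩ := z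
  obtain ⟨c, c'⟩ := w
  obtain ⟨b, hb : a' = a⁻¹ * b, hab⟩ := hz
  subst hb
  obtain ⟨d, hd : c' = c⁻¹ * d, hcd⟩ := hw
  subst hd
  rw [qTau_eq_one_iff]
  simp only [hq.qSigma_mul_left, hq.qSigma_mul_right, hq.qSigma_inv_left, hq.qSigma_inv_right]
  rw [qSigma_comm q a d, hab d, hcd b, hβ.qSigma_eq b d]
  apply Units.ext; push_cast; field_simp

lemma mem_gammaSet_of_forall_qTau_eq_one [Finite A] (hnd : IsNondeg q) {z : A × A}
    (hz : ∀ w ∈ GammaSet q B β, qTau q z w = 1) : z ∈ GammaSet q B β := by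
  obtain ⟨x, y⟩ := z
  have hτ {a a' : A} (h : (a, a') ∈ GammaSet q B β) : qSigma q x a = qSigma q y a' :=
    (qTau_eq_one_iff q _ _).1 (hz _ h)
  have hxy : x * y ∈ B := by
    refine hnd.mem_of_forall_qSigma_eq_one hq B fun a ha => ?_
    rw [hq.qSigma_mul_left, hτ (mk_inv_mem_gammaSet hβ fun c => ha c c.2),
      hq.qSigma_inv_right, inv_mul_cancel]
  refine ⟨⟨x * y, hxy⟩, by simp, fun c => ?_⟩
  obtain ⟨a, ha⟩ := hnd.exists_qSigma_eq_of_subgroup hq B (hβ.bichar.flip c)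
  calc qSigma q c x = qSigma q y c := by rw [qSigma_comm, hτ (diag_mem_gammaSet hβ c)]
    _ = qSigma q (x * y) a := by
      rw [hq.qSigma_mul_left, hτ (mk_mem_gammaSet (b := c) ha), hq.qSigma_mul_right,
        hq.qSigma_inv_right, mul_right_comm, inv_mul_cancel, one_mul]
    _ = β c ⟨x * y, hxy⟩ := (ha ⟨x * y, hxy⟩).trans (hβ.symm _ _)

end Gamma

/-- for nondegenerate `q`, the subgroup `Γ(B,β)` of `A × A` is Lagrangian
with respect to `q × q⁻¹`: it is isotropic and equals its own orthogonal complement. -/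
theorem gamma_lagrangian {A : Type*} [CommGroup A] [Fintype A]
    (q : A → ℂˣ) (hq : IsQuadratic q) (hnd : IsNondeg q)
    (B : Subgroup A) (β : B → B → ℂˣ) (hβ : IsSchellekens q B β)
    (Γ : Subgroup (A × A)) (hΓ : (Γ : Set (A × A)) = GammaSet q B β) :
    (∀ z ∈ Γ, q z.1 * (q z.2)⁻¹ = 1) ∧
    (Γ : Set (A × A)) = {z : A × A | ∀ w ∈ Γ, qTau q z w = 1} := by
  have hmem (z : A × A) : z ∈ Γ ↔ z ∈ GammaSet q B β := by rw [← hΓ, SetLike.mem_coe]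
  refine ⟨fun z hz => ?_, ?_⟩
  · rw [apply_snd_eq_apply_fst_of_mem_gammaSet hq hβ ((hmem z).1 hz), mul_inv_cancel]
  · ext z
    simp only [SetLike.mem_coe, Set.mem_ofPred_eq, hmem]
    exact ⟨fun hz w hw => qTau_eq_one_of_mem_gammaSet hq hβ hz hw,
      mem_gammaSet_of_forall_qTau_eq_one hq hβ hnd⟩
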